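/- Let n ≥ 1 and let 1 ≤ z_1 < z_2 < ⋯ < z_m ≤ n. For 1 ≤ z ≤ n let γ_z denote the cyclic permutation (1 2 ⋯ z) of {1,…,n}, i.e. γ_z(k) = k+1 for 1 ≤ k < z, γ_z(z) = 1, and γ_z(k) = k for z < k ≤ n. Let σ := γ_{z_m} ∘ γ_{z_{m−1}} ∘ ⋯ ∘ γ_{z_1} (so that γ_{z_1} is applied first). Then σ(z_k) = m − k + 1 for every 1 ≤ k ≤ m. -/
import Mathlib


theorem stmt_17 (n m : ℕ) (hn : 1 ≤ n) (z : Fin m → ℕ) (hmono : StrictMono z)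
    (hz1 : ∀ k, 1 ≤ z k) (hzn : ∀ k, z k ≤ n)
    (γ : Fin m → Equiv.Perm (Fin n))
    (hγ : ∀ k : Fin m,
      (∀ p : Fin n, (p : ℕ) + 1 < z k → (γ k p : ℕ) = (p : ℕ) + 1) ∧
      (∀ p : Fin n, (p : ℕ) + 1 = z k → (γ k p : ℕ) = 0) ∧
      (∀ p : Fin n, z k < (p : ℕ) + 1 → γ k p = p)) :
    ∀ k : Fin m,
      ((((List.ofFn γ).reverse.prod))
          (⟨z k - 1, by have := hz1 k; have := hzn k; omega⟩ : Fin n) : ℕ) =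
        m - 1 - (k : ℕ) := by
  -- lower bound: z j > j
  have hlow : ∀ j : Fin m, (j : ℕ) < z j := by
    have H : ∀ v : ℕ, ∀ j : Fin m, (j : ℕ) = v → v < z j := by
      intro v
      induction v with
      | zero => intro j _; exact hz1 j
      | succ v ih =>
        intro j hj
        have hv : v < m := by omega
        have h1 : v < z ⟨v, hv⟩ := ih ⟨v, hv⟩ rfl
        have h2 : z ⟨v, hv⟩ < z j := hmono (by simp [Fin.lt_def, hj])
        omega
    intro j; exact H (j : ℕ) j rfl
  intro k
  set pt : Fin n := ⟨z k - 1, by have := hz1 k; have := hzn k; omega⟩ with hpt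
  -- partial products
  set σi : ℕ → Equiv.Perm (Fin n) := fun i => (((List.ofFn γ).take i).reverse.prod) with hσi
  have hstep : ∀ i (h : i < m), σi (i + 1) = γ ⟨i, h⟩ * σi i := by
    intro i h
    have hlen : i < (List.ofFn γ).length := by simpa using h
    simp only [hσi, List.take_succ, List.getElem?_eq_getElem hlen, List.getElem_ofFn,
      Option.toList_some, List.reverse_append, List.reverse_cons, List.reverse_nil,
      List.nil_append, List.singleton_append, List.prod_cons]
  have main : ∀ i, i ≤ m →
      (i ≤ (k : ℕ) → ((σi i) pt : ℕ) = z k - 1) ∧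
      ((k : ℕ) < i → ((σi i) pt : ℕ) = i - 1 - (k : ℕ)) := by
    intro i
    induction i with
    | zero =>
      intro _
      constructor
      · intro _; simp [hσi, hpt]
      · omega
    | succ i ih =>
      intro him
      have hi : i < m := by omega
      obtain ⟨ih1, ih2⟩ := ih (by omega)
      have hrw : ((σi (i + 1)) pt : ℕ) = ((γ ⟨i, hi⟩) ((σi i) pt) : ℕ) := by
        rw [hstep i hi]; rfl
      rcases lt_trichotomy i (k : ℕ) with hik | hik | hik
      · -- γ i fixes the point
        constructor
        · intro _
          have hv : ((σi i) pt : ℕ) = z k - 1 := ih1 (by omega)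
          have hzz : z ⟨i, hi⟩ < z k := hmono (by simp [Fin.lt_def, hik])
          have hfix : γ ⟨i, hi⟩ ((σi i) pt) = (σi i) pt :=
            (hγ ⟨i, hi⟩).2.2 _ (by rw [hv]; have := hz1 k; omega)
          rw [hrw, hfix, hv]
        · intro h; omega
      · -- i = k : γ k sends it to 0
        constructor
        · intro h; omega
        · intro _
          have hv : ((σi i) pt : ℕ) = z k - 1 := ih1 (by omega)
          have hkk : (⟨i, hi⟩ : Fin m) = k := Fin.ext hik
          have h0 : ((γ ⟨i, hi⟩) ((σi i) pt) : ℕ) = 0 := by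
            apply (hγ ⟨i, hi⟩).2.1
            rw [hkk, hv]; have := hz1 k; omega
          rw [hrw, h0]; omega
      · -- i > k : γ i increments by 1
        constructor
        · intro h; omega
        · intro _
          have hv : ((σi i) pt : ℕ) = i - 1 - (k : ℕ) := ih2 hik
          have hz : (i : ℕ) < z ⟨i, hi⟩ := hlow ⟨i, hi⟩
          have hsucc : ((γ ⟨i, hi⟩) ((σi i) pt) : ℕ) = ((σi i) pt : ℕ) + 1 := by
            apply (hγ ⟨i, hi⟩).1
            rw [hv]; omega
          rw [hrw, hsucc, hv]; omega
  have hkm : (k : ℕ) < m := k.isLt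
  have hfin : (List.ofFn γ).reverse.prod = σi m := by
    simp [hσi, List.take_of_length_le]
  rw [hfin]
  exact (main m le_rfl).2 hkm
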